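/- arXiv:2511.05352 — 4 statements merged into one kernel-verified Lean document; each statement's English description precedes it below -/
import Mathlib

section
/- Fix p ∈ {1,…,P} and suppose the factor matrices satisfy ∏_{q≠p} λ_q(r) = 1 for every r ∈ {1,…,R}, where λ_q(r) = Σ_{j=1}^{N_q} A_q(j,r). Then there exists a constant C not depending on the entries of A_p such that Q(θ,θ̄) = Σ_{j=1}^{N_p} Σ_{r=1}^R [ Z̄_p(j,r) log A_p(j,r) − A_p(j,r) ] + C, where Z̄_p(j,r) = Σ_{i : i_p = j} z̄_{r,i}; that is, Q equals, up to an additive constant independent of A_p, the Poisson loglikelihood of data Z̄_p with entrywise mean matrix A_p. -/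
open Finset

noncomputable section

variable {P R : ℕ} {N : Fin P → ℕ}

/-- Entry `m_i = Σ_r ∏_p A_p(i_p, r)` of the CP parameter tensor. -/
def mTen (A : (p : Fin P) → Fin (N p) → Fin R → ℝ) (i : (p : Fin P) → Fin (N p)) : ℝ :=
  ∑ r, ∏ p, A p (i p) r

/-- Conditional mean `z̄_{r,i} = (∏_p Ā_p(i_p,r)) x_i / m̄_i` of the latent entry. -/
def zbar (Abar : (p : Fin P) → Fin (N p) → Fin R → ℝ)
    (X : ((p : Fin P) → Fin (N p)) → ℕ) (r : Fin R) (i : (p : Fin P) → Fin (N p)) : ℝ :=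
  (∏ p, Abar p (i p) r) * (X i : ℝ) / mTen Abar i

/-- Expected complete loglikelihood
`Q(θ, θ̄) = Σ_r Σ_i [ z̄_{r,i} log(∏_p A_p(i_p,r)) − ∏_p A_p(i_p,r) ]`. -/
def Qfun (A Abar : (p : Fin P) → Fin (N p) → Fin R → ℝ)
    (X : ((p : Fin P) → Fin (N p)) → ℕ) : ℝ :=
  ∑ r, ∑ i : (p : Fin P) → Fin (N p),
    (zbar Abar X r i * Real.log (∏ p, A p (i p) r) - ∏ p, A p (i p) r)

/-- Mode-`p` contraction `Z̄_p(j,r) = Σ_{i : i_p = j} z̄_{r,i}`. -/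
def Zbar (Abar : (p : Fin P) → Fin (N p) → Fin R → ℝ)
    (X : ((p : Fin P) → Fin (N p)) → ℕ) (p : Fin P) (j : Fin (N p)) (r : Fin R) : ℝ :=
  ∑ i ∈ Finset.univ.filter (fun i : (q : Fin P) → Fin (N q) => i p = j), zbar Abar X r i

/-- Column sum `λ_q(r) = Σ_j A_q(j,r)`. -/
def lamCol (A : (p : Fin P) → Fin (N p) → Fin R → ℝ) (q : Fin P) (r : Fin R) : ℝ :=
  ∑ j, A q j r


/-- **Poisson interpretation of `Q` under the standard scaling.** Fix a mode `p` and
suppose `∏_{q≠p} λ_q(r) = 1` for every `r`. Then there is a constant `C`,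
independent of the entries of `A_p` (here expressed by quantifying over the matrix `B`
substituted in mode `p`), such that
`Q(θ,θ̄) = Σ_j Σ_r [ Z̄_p(j,r) log A_p(j,r) − A_p(j,r) ] + C`, i.e. `Q` is, up to an
additive constant, the Poisson loglikelihood of data `Z̄_p` with mean matrix `A_p`. -/
theorem stmt_4 (P R : ℕ) (hP : 2 ≤ P) (hR : 1 ≤ R) (N : Fin P → ℕ) (hN : ∀ p, 1 ≤ N p)
    (A Abar : (p : Fin P) → Fin (N p) → Fin R → ℝ)
    (hA : ∀ p j r, 0 < A p j r) (hAbar : ∀ p j r, 0 < Abar p j r)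
    (X : ((p : Fin P) → Fin (N p)) → ℕ) (p : Fin P)
    (hlam : ∀ r, ∏ q ∈ Finset.univ.erase p, lamCol A q r = 1) :
    ∃ C : ℝ, ∀ B : Fin (N p) → Fin R → ℝ, (∀ j r, 0 < B j r) →
      Qfun (Function.update A p B) Abar X =
        (∑ j, ∑ r, (Zbar Abar X p j r * Real.log (B j r) - B j r)) + C := by
  classical
  refine ⟨∑ r, ∑ i : (q : Fin P) → Fin (N q),
      zbar Abar X r i * Real.log (∏ q ∈ Finset.univ.erase p, A q (i q) r), ?_⟩
  intro B hB
  have hrest : ∀ (r : Fin R) (i : (q : Fin P) → Fin (N q)),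
      0 < ∏ q ∈ Finset.univ.erase p, A q (i q) r :=
    fun r i => Finset.prod_pos fun q _ => hA q (i q) r
  have hprod : ∀ (r : Fin R) (i : (q : Fin P) → Fin (N q)),
      (∏ q, Function.update A p B q (i q) r)
        = B (i p) r * ∏ q ∈ Finset.univ.erase p, A q (i q) r := by
    intro r i
    rw [← Finset.mul_prod_erase Finset.univ (fun q => Function.update A p B q (i q) r)
        (Finset.mem_univ p), Function.update_self]
    congr 1
    exact Finset.prod_congr rfl fun q hq => by
      rw [Function.update_of_ne (Finset.ne_of_mem_erase hq)]
  have key : ∀ r : Fin R,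
      (∑ i : (q : Fin P) → Fin (N q),
        (zbar Abar X r i * Real.log (∏ q, Function.update A p B q (i q) r)
          - ∏ q, Function.update A p B q (i q) r))
      = (∑ j, (Zbar Abar X p j r * Real.log (B j r) - B j r))
        + ∑ i : (q : Fin P) → Fin (N q),
            zbar Abar X r i * Real.log (∏ q ∈ Finset.univ.erase p, A q (i q) r) := by
    intro r
    have hlog : ∀ i : (q : Fin P) → Fin (N q),
        Real.log (∏ q, Function.update A p B q (i q) r)
        = Real.log (B (i p) r) + Real.log (∏ q ∈ Finset.univ.erase p, A q (i q) r) := by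
      intro i
      rw [hprod r i, Real.log_mul (ne_of_gt (hB _ r)) (ne_of_gt (hrest r i))]
    have hS3 : (∑ i : (q : Fin P) → Fin (N q), ∏ q, Function.update A p B q (i q) r)
        = ∑ j, B j r := by
      have h1 := Finset.prod_univ_sum (fun q : Fin P => (Finset.univ : Finset (Fin (N q))))
        (fun q j => Function.update A p B q j r)
      rw [Fintype.piFinset_univ] at h1
      rw [← h1, ← Finset.mul_prod_erase Finset.univ
        (fun q => ∑ j, Function.update A p B q j r) (Finset.mem_univ p)]
      have h2 : (∏ q ∈ Finset.univ.erase p, ∑ j, Function.update A p B q j r)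
          = ∏ q ∈ Finset.univ.erase p, lamCol A q r := by
        refine Finset.prod_congr rfl fun q hq => ?_
        rw [lamCol]
        exact Finset.sum_congr rfl fun j _ => by
          rw [Function.update_of_ne (Finset.ne_of_mem_erase hq)]
      rw [h2, hlam r, Function.update_self, mul_one]
    have hS1 : (∑ i : (q : Fin P) → Fin (N q), zbar Abar X r i * Real.log (B (i p) r))
        = ∑ j, Zbar Abar X p j r * Real.log (B j r) := by
      rw [← Finset.sum_fiberwise_of_maps_to (fun i _ => Finset.mem_univ (i p))
        (fun i => zbar Abar X r i * Real.log (B (i p) r))]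
      refine Finset.sum_congr rfl fun j _ => ?_
      rw [Zbar, Finset.sum_mul]
      exact Finset.sum_congr rfl fun i hi => by
        rw [(Finset.mem_filter.mp hi).2]
    simp only [hlog, mul_add]
    rw [Finset.sum_sub_distrib, Finset.sum_add_distrib, hS1, hS3,
      Finset.sum_sub_distrib]
    ring
  rw [Qfun, Finset.sum_congr rfl (fun r _ => key r), Finset.sum_add_distrib]
  congr 1
  exact Finset.sum_comm
end
end

section
/- For every pair k ≠ l in {1,…,P}, indices i ∈ {1,…,N_k}, j ∈ {1,…,N_l} and r, s ∈ {1,…,R}, the second-order partial derivative of the PCP loglikelihood satisfies −∂²ℓ(X|θ)/∂A_k(i,r)∂A_l(j,s) = A_k(i,s) A_l(j,r) Σ_{i' : i'_k = i, i'_l = j} (x_{i'}/m_{i'}²) ∏_{q≠k,l} A_q(i'_q,r) A_q(i'_q,s) + [r = s] · ( ∏_{q≠k,l} λ_q(r) − Σ_{i' : i'_k = i, i'_l = j} (x_{i'}/m_{i'}) ∏_{q≠k,l} A_q(i'_q,r) ), where λ_q(r) = Σ_{j=1}^{N_q} A_q(j,r), [r = s] is 1 if r = s and 0 otherwise, the sums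 range over all multi-indices i' with k-th coordinate i and l-th coordinate j, and products over the empty set (the case P = 2) equal 1. -/
open Finset

noncomputable section

variable {P R : ℕ} {N : Fin P → ℕ}

/-- PCP loglikelihood `ℓ(X|θ) = Σ_i [ x_i log m_i − m_i − log(x_i!) ]`. -/
def llik (A : (p : Fin P) → Fin (N p) → Fin R → ℝ)
    (X : ((p : Fin P) → Fin (N p)) → ℕ) : ℝ :=
  ∑ i : (p : Fin P) → Fin (N p),
    ((X i : ℝ) * Real.log (mTen A i) - mTen A i - Real.log (Nat.factorial (X i) : ℝ))

/-- The collection of factor matrices with the single entry `A_k(i,r)` replaced by `t`. -/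
def updEntry (A : (q : Fin P) → Fin (N q) → Fin R → ℝ) (k : Fin P) (i : Fin (N k)) (r : Fin R)
    (t : ℝ) : (q : Fin P) → Fin (N q) → Fin R → ℝ :=
  Function.update A k (Function.update (A k) i (Function.update (A k i) r t))

/-- Partial derivative of a function of the factor matrices in the single entry
`A_k(i,r)`, i.e. the derivative of the real function obtained by varying that entry
with all other entries fixed, evaluated at the current entry value. -/
def pd (f : ((q : Fin P) → Fin (N q) → Fin R → ℝ) → ℝ) (k : Fin P) (i : Fin (N k)) (r : Fin R)
    (A : (q : Fin P) → Fin (N q) → Fin R → ℝ) : ℝ :=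
  deriv (fun t => f (updEntry A k i r t)) (A k i r)

/-!
Each `m_{i'}` is affine in every single entry `A_k(i,r)`, with slope
`∂_k m_{i'} = [i'_k = i] ∏_{q ≠ k} A_q(i'_q, r)`. Differentiating `ℓ` twice therefore gives
`∂_k ∂_l ℓ = Σ_{i'} (-(x_{i'}/m_{i'}²) ∂_k m_{i'} ∂_l m_{i'} + (x_{i'}/m_{i'} - 1) ∂_k ∂_l m_{i'})`.
For `k ≠ l` both `∂_k m ∂_l m` and `∂_k ∂_l m` vanish off the fibre `i'_k = i, i'_l = j`, and the
sum over that fibre of `∏_{q ≠ k,l} A_q(i'_q, r)` factorises into `∏_{q ≠ k,l} λ_q(r)`.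
-/

lemma hasDerivAt_add_sub_mul (c d t₀ : ℝ) : HasDerivAt (fun t => c + (t - t₀) * d) d t₀ := by
  simpa using (((hasDerivAt_id t₀).sub_const t₀).mul_const d).const_add c

section Entrywise

variable (A : (p : Fin P) → Fin (N p) → Fin R → ℝ) (k : Fin P) (i : Fin (N k)) (r : Fin R)

lemma updEntry_of_ne {p : Fin P} (t : ℝ) (h : p ≠ k) : updEntry A k i r t p = A p :=
  Function.update_of_ne h _ _

lemma updEntry_self_apply (t : ℝ) (a : Fin (N k)) (b : Fin R) :
    updEntry A k i r t k a b = if a = i ∧ b = r then t else A k a b := by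
  simp only [updEntry, Function.update_self, Function.update_apply]
  split_ifs <;> simp_all

lemma updEntry_eq_self : updEntry A k i r (A k i r) = A := by
  simp [updEntry]

lemma updEntry_pos (hA : ∀ p a b, 0 < A p a b) {t : ℝ} (ht : 0 < t) (p : Fin P)
    (a : Fin (N p)) (b : Fin R) : 0 < updEntry A k i r t p a b := by
  by_cases hp : p = k
  · subst hp
    rw [updEntry_self_apply]
    split_ifs
    exacts [ht, hA _ _ _]
  · rw [updEntry_of_ne A k i r t hp]
    exact hA p a b

lemma prod_updEntry (S : Finset (Fin P)) (i' : (p : Fin P) → Fin (N p)) (s : Fin R) (t : ℝ) :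
    ∏ q ∈ S, updEntry A k i r t q (i' q) s =
      ∏ q ∈ S, A q (i' q) s + (t - A k i r) *
        if k ∈ S ∧ i' k = i ∧ s = r then ∏ q ∈ S.erase k, A q (i' q) s else 0 := by
  have hrest : ∀ q ∈ S, q ≠ k → updEntry A k i r t q (i' q) s = A q (i' q) s :=
    fun q _ hq => by rw [updEntry_of_ne A k i r t hq]
  by_cases hk : k ∈ S
  · rw [← mul_prod_erase S _ hk, ← mul_prod_erase S (fun q => A q (i' q) s) hk,
      prod_congr rfl fun q hq => hrest q (mem_of_mem_erase hq) (ne_of_mem_erase hq),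
      updEntry_self_apply]
    by_cases h : i' k = i ∧ s = r
    · obtain ⟨hi, rfl⟩ := h
      simp only [hk, hi, and_self, if_true]
      ring
    · simp [hk, h]
  · rw [prod_congr rfl fun q hq => hrest q hq (ne_of_mem_of_not_mem hq hk)]
    simp [hk]

lemma hasDerivAt_prod_updEntry (S : Finset (Fin P)) (i' : (p : Fin P) → Fin (N p)) (s : Fin R) :
    HasDerivAt (fun t => ∏ q ∈ S, updEntry A k i r t q (i' q) s)
      (if k ∈ S ∧ i' k = i ∧ s = r then ∏ q ∈ S.erase k, A q (i' q) s else 0) (A k i r) :=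
  (hasDerivAt_add_sub_mul _ _ _).congr_of_eventuallyEq
    (Filter.Eventually.of_forall fun t => prod_updEntry A k i r S i' s t)

def dmTen (i' : (p : Fin P) → Fin (N p)) : ℝ :=
  if i' k = i then ∏ q ∈ univ.erase k, A q (i' q) r else 0

lemma hasDerivAt_mTen_updEntry (i' : (p : Fin P) → Fin (N p)) :
    HasDerivAt (fun t => mTen (updEntry A k i r t) i') (dmTen A k i r i') (A k i r) := by
  simpa [dmTen, mTen, ite_and, sum_ite_irrel] using
    HasDerivAt.fun_sum (u := univ) fun s _ => hasDerivAt_prod_updEntry A k i r univ i' s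

lemma hasDerivAt_dmTen_updEntry {l : Fin P} (hkl : k ≠ l) (j : Fin (N l)) (s : Fin R)
    (i' : (p : Fin P) → Fin (N p)) :
    HasDerivAt (fun t => dmTen (updEntry A k i r t) l j s i')
      (if i' k = i ∧ i' l = j ∧ r = s then ∏ q ∈ (univ.erase k).erase l, A q (i' q) r else 0)
      (A k i r) := by
  unfold dmTen
  by_cases hj : i' l = j
  · convert hasDerivAt_prod_updEntry A k i r (univ.erase l) i' s using 1
    · simp [hj]
    · by_cases hrs : r = s
      · subst hrs
        simp [hj, hkl, erase_right_comm]
      · simp [hrs, Ne.symm hrs]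
  · simpa [hj] using hasDerivAt_const (A k i r) (0 : ℝ)

end Entrywise

lemma mTen_pos {A : (p : Fin P) → Fin (N p) → Fin R → ℝ} (hR : 1 ≤ R)
    (hA : ∀ p a b, 0 < A p a b) (i' : (p : Fin P) → Fin (N p)) : 0 < mTen A i' :=
  have : Nonempty (Fin R) := Fin.pos_iff_nonempty.mp hR
  sum_pos (fun r _ => prod_pos fun p _ => hA p (i' p) r) univ_nonempty

lemma pd_llik (X : ((p : Fin P) → Fin (N p)) → ℕ) (A : (p : Fin P) → Fin (N p) → Fin R → ℝ)
    (l : Fin P) (j : Fin (N l)) (s : Fin R) (hm : ∀ i', mTen A i' ≠ 0) :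
    pd (fun A' => llik A' X) l j s A = ∑ i', ((X i' : ℝ) / mTen A i' - 1) * dmTen A l j s i' := by
  refine HasDerivAt.deriv (HasDerivAt.fun_sum fun i' _ => ?_)
  have hmi := hasDerivAt_mTen_updEntry A l j s i'
  have hlog := hmi.log (by rw [updEntry_eq_self]; exact hm i')
  rw [updEntry_eq_self] at hlog
  convert ((hlog.const_mul (X i' : ℝ)).fun_sub hmi).sub_const (Real.log (X i').factorial)
    using 1
  field_simp [hm i']

lemma pd_pd_llik (X : ((p : Fin P) → Fin (N p)) → ℕ) {A : (p : Fin P) → Fin (N p) → Fin R → ℝ}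
    (hR : 1 ≤ R) (hA : ∀ p a b, 0 < A p a b) {k l : Fin P} (hkl : k ≠ l) (i : Fin (N k))
    (j : Fin (N l)) (r s : Fin R) :
    pd (fun A' => pd (fun A'' => llik A'' X) l j s A') k i r A =
      ∑ i', (-((X i' : ℝ) / mTen A i' ^ 2 * (dmTen A k i r i' * dmTen A l j s i'))
        + ((X i' : ℝ) / mTen A i' - 1) *
          if i' k = i ∧ i' l = j ∧ r = s then ∏ q ∈ (univ.erase k).erase l, A q (i' q) r
          else 0) := by
  have hnear : (fun t => pd (fun A'' => llik A'' X) l j s (updEntry A k i r t))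
      =ᶠ[nhds (A k i r)] fun t => ∑ i',
        ((X i' : ℝ) / mTen (updEntry A k i r t) i' - 1) * dmTen (updEntry A k i r t) l j s i' := by
    filter_upwards [eventually_gt_nhds (hA k i r)] with t ht
    exact pd_llik X _ l j s fun i' => (mTen_pos hR (updEntry_pos A k i r hA ht) i').ne'
  refine HasDerivAt.deriv (HasDerivAt.congr_of_eventuallyEq ?_ hnear)
  refine HasDerivAt.fun_sum fun i' _ => ?_
  have hm := hasDerivAt_mTen_updEntry A k i r i'
  have hm0 : mTen A i' ≠ 0 := (mTen_pos hR hA i').ne'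
  have hquot := ((hasDerivAt_const (A k i r) (X i' : ℝ)).fun_div hm
    (by rwa [updEntry_eq_self])).sub_const 1
  have hprod := hquot.fun_mul (hasDerivAt_dmTen_updEntry A k i r hkl j s i')
  rw [updEntry_eq_self] at hprod
  refine hprod.congr_deriv ?_
  ring

lemma dmTen_mul_dmTen (A : (p : Fin P) → Fin (N p) → Fin R → ℝ) {k l : Fin P} (hkl : k ≠ l)
    (i : Fin (N k)) (j : Fin (N l)) (r s : Fin R) (i' : (p : Fin P) → Fin (N p)) :
    dmTen A k i r i' * dmTen A l j s i' =
      if i' k = i ∧ i' l = j then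
        A k i s * A l j r * ∏ q ∈ (univ.erase k).erase l, A q (i' q) r * A q (i' q) s
      else 0 := by
  by_cases h : i' k = i ∧ i' l = j
  · obtain ⟨hi, hj⟩ := h
    have hlk : l ∈ univ.erase k := mem_erase.mpr ⟨hkl.symm, mem_univ l⟩
    have hkl' : k ∈ univ.erase l := mem_erase.mpr ⟨hkl, mem_univ k⟩
    rw [dmTen, dmTen, if_pos hi, if_pos hj, if_pos ⟨hi, hj⟩,
      ← mul_prod_erase _ _ hlk, ← mul_prod_erase _ _ hkl', erase_right_comm, prod_mul_distrib,
      hi, hj]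
    ring
  · unfold dmTen
    rw [if_neg h]
    split_ifs <;> simp_all

lemma sum_fibre_prod_eq_prod_sum (f : (q : Fin P) → Fin (N q) → ℝ) {k l : Fin P} (hkl : k ≠ l)
    (i : Fin (N k)) (j : Fin (N l)) :
    ∑ i' ∈ univ.filter (fun i' : (q : Fin P) → Fin (N q) => i' k = i ∧ i' l = j),
      ∏ q ∈ (univ.erase k).erase l, f q (i' q) = ∏ q ∈ (univ.erase k).erase l, ∑ a, f q a := by
  -- Expand a product of sums whose factors at `k` and `l` are the indicators of `i` and `j`.
  set g : (q : Fin P) → Fin (N q) → ℝ := Function.update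
    (Function.update f k fun a => if a = i then 1 else 0) l fun a => if a = j then 1 else 0
  have hgk : g k = fun a => if a = i then 1 else 0 := by
    simp only [g, Function.update_of_ne hkl, Function.update_self]
  have hgl : g l = fun a => if a = j then 1 else 0 := Function.update_self ..
  have hg : ∀ q ∈ (univ.erase k).erase l, g q = f q := fun q hq => by
    simp only [g, Function.update_of_ne (ne_of_mem_erase hq),
      Function.update_of_ne (ne_of_mem_erase (mem_of_mem_erase hq))]
  have hlk : l ∈ univ.erase k := mem_erase.mpr ⟨hkl.symm, mem_univ l⟩
  have split (F : Fin P → ℝ) : ∏ q, F q = F k * (F l * ∏ q ∈ (univ.erase k).erase l, F q) := by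
    rw [mul_prod_erase _ _ hlk, mul_prod_erase _ _ (mem_univ k)]
  calc _ = ∑ i' : (q : Fin P) → Fin (N q), ∏ q, g q (i' q) := by
        rw [sum_filter]
        refine sum_congr rfl fun i' _ => ?_
        rw [split, hgk, hgl, prod_congr rfl fun q hq => congrFun (hg q hq) (i' q)]
        by_cases hi : i' k = i <;> by_cases hj : i' l = j <;> simp [hi, hj]
    _ = ∏ q, ∑ a, g q a := by rw [prod_univ_sum, Fintype.piFinset_univ]
    _ = _ := by
        rw [split, hgk, hgl, prod_congr rfl fun q hq => congrArg (∑ a, · a) (hg q hq)]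
        simp

theorem stmt_9_general (P R : ℕ) (hR : 1 ≤ R) (N : Fin P → ℕ)
    (A : (p : Fin P) → Fin (N p) → Fin R → ℝ) (hA : ∀ p j r, 0 < A p j r)
    (X : ((p : Fin P) → Fin (N p)) → ℕ)
    (k l : Fin P) (hkl : k ≠ l) (i : Fin (N k)) (j : Fin (N l)) (r s : Fin R) :
    pd (fun A' => pd (fun A'' => llik A'' X) l j s A') k i r A =
      -(A k i s * A l j r *
          (∑ i' ∈ Finset.univ.filter
              (fun i' : (q : Fin P) → Fin (N q) => i' k = i ∧ i' l = j),
            (X i' : ℝ) / (mTen A i') ^ 2 *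
              ∏ q ∈ (Finset.univ.erase k).erase l, A q (i' q) r * A q (i' q) s)
        + (if r = s then
            (∏ q ∈ (Finset.univ.erase k).erase l, lamCol A q r)
              - ∑ i' ∈ Finset.univ.filter
                  (fun i' : (q : Fin P) → Fin (N q) => i' k = i ∧ i' l = j),
                  (X i' : ℝ) / mTen A i' *
                    ∏ q ∈ (Finset.univ.erase k).erase l, A q (i' q) r
          else 0)) := by
  have hlam : ∏ q ∈ (univ.erase k).erase l, lamCol A q r =
      ∑ i' ∈ univ.filter (fun i' : (q : Fin P) → Fin (N q) => i' k = i ∧ i' l = j),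
        ∏ q ∈ (univ.erase k).erase l, A q (i' q) r :=
    (sum_fibre_prod_eq_prod_sum (fun q a => A q a r) hkl i j).symm
  rw [pd_pd_llik X hR hA hkl, hlam, mul_sum, ← sum_sub_distrib, ite_sum_zero,
    ← sum_add_distrib, ← sum_neg_distrib, sum_filter]
  refine sum_congr rfl fun i' _ => ?_
  rw [dmTen_mul_dmTen A hkl]
  by_cases hfib : i' k = i ∧ i' l = j
  · simp only [hfib, true_and, if_true]
    split_ifs <;> ring
  · rw [if_neg hfib, if_neg fun h => hfib ⟨h.1, h.2.1⟩, if_neg hfib]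
    ring

/-- **Cross-mode blocks of the observed Fisher information.** For `k ≠ l`:
`−∂²ℓ/∂A_k(i,r)∂A_l(j,s) = A_k(i,s) A_l(j,r) Σ_{i' : i'_k=i, i'_l=j} (x_{i'}/m_{i'}²)
∏_{q≠k,l} A_q(i'_q,r) A_q(i'_q,s) + [r=s]·(∏_{q≠k,l} λ_q(r) −
Σ_{i' : i'_k=i, i'_l=j} (x_{i'}/m_{i'}) ∏_{q≠k,l} A_q(i'_q,r))`, where products over
the empty set (the case `P = 2`) equal `1`. -/
theorem stmt_9 (P R : ℕ) (hP : 2 ≤ P) (hR : 1 ≤ R) (N : Fin P → ℕ) (hN : ∀ p, 1 ≤ N p)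
    (A : (p : Fin P) → Fin (N p) → Fin R → ℝ) (hA : ∀ p j r, 0 < A p j r)
    (X : ((p : Fin P) → Fin (N p)) → ℕ)
    (k l : Fin P) (hkl : k ≠ l) (i : Fin (N k)) (j : Fin (N l)) (r s : Fin R) :
    pd (fun A' => pd (fun A'' => llik A'' X) l j s A') k i r A =
      -(A k i s * A l j r *
          (∑ i' ∈ Finset.univ.filter
              (fun i' : (q : Fin P) → Fin (N q) => i' k = i ∧ i' l = j),
            (X i' : ℝ) / (mTen A i') ^ 2 *
              ∏ q ∈ (Finset.univ.erase k).erase l, A q (i' q) r * A q (i' q) s)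
        + (if r = s then
            (∏ q ∈ (Finset.univ.erase k).erase l, lamCol A q r)
              - ∑ i' ∈ Finset.univ.filter
                  (fun i' : (q : Fin P) → Fin (N q) => i' k = i ∧ i' l = j),
                  (X i' : ℝ) / mTen A i' *
                    ∏ q ∈ (Finset.univ.erase k).erase l, A q (i' q) r
          else 0)) :=
  stmt_9_general P R hR N A hA X k l hkl i j r s
end
end

section
/- The second-order partial derivatives of the rank-one PCP loglikelihood satisfy: for every p and i, j ∈ {1,…,N_p}, ∂²ℓ(X|θ)/∂a_p(i)∂a_p(j) = −[i = j] · x_p(i)/a_p(i)²; and for p ≠ q, i ∈ {1,…,N_p}, j ∈ {1,…,N_q}, ∂²ℓ(X|θ)/∂a_p(i)∂a_q(j) = −∏_{s≠p,q} λ_s = −λ/(λ_p λ_q), where x_p(i) = Σ_{i' : i'_p = i} x_{i'}, λ_s = Σ_j a_s(j), λ = λ_1⋯λ_P, and [i = j] is 1 if i = j and 0 otherwise. -/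
/-! On the positive orthant the loglikelihood separates as
`ℓ = Σ_p Σ_k x_p(k) log a_p(k) − ∏_p λ_p − const`: `Σ_i x_i log m_i` regroups by the marginals
and `Σ_i m_i = ∏_p λ_p`. Hence `∂ℓ/∂a_q(j) = x_q(j)/a_q(j) − ∏_{s≠q} λ_s`, and since each `λ_s`
is affine in the entries of `a_s`, differentiating once more gives the Hessian. -/

open Finset

noncomputable section

variable {P : ℕ} {N : Fin P → ℕ}

/-- Rank-one parameter tensor entry `m_i = ∏_p a_p(i_p)`. -/
def mOne (a : (p : Fin P) → Fin (N p) → ℝ) (i : (p : Fin P) → Fin (N p)) : ℝ :=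
  ∏ p, a p (i p)

/-- Rank-one PCP loglikelihood `ℓ(X|θ) = Σ_i [ x_i log m_i − m_i − log(x_i!) ]`. -/
def llik1 (a : (p : Fin P) → Fin (N p) → ℝ) (X : ((p : Fin P) → Fin (N p)) → ℕ) : ℝ :=
  ∑ i : (p : Fin P) → Fin (N p),
    ((X i : ℝ) * Real.log (mOne a i) - mOne a i - Real.log (Nat.factorial (X i) : ℝ))

/-- Mode-`p` marginal sum `x_p(j) = Σ_{i : i_p = j} x_i` (as a real number). -/
def xmarg (X : ((p : Fin P) → Fin (N p)) → ℕ) (p : Fin P) (j : Fin (N p)) : ℝ :=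
  ∑ i ∈ Finset.univ.filter (fun i : (q : Fin P) → Fin (N q) => i p = j), (X i : ℝ)

/-- Factor sum `λ_p = Σ_j a_p(j)`. -/
def lam1 (a : (p : Fin P) → Fin (N p) → ℝ) (p : Fin P) : ℝ :=
  ∑ j, a p j

/-- Partial derivative of a function of the factor vectors in the single entry
`a_p(j)`: the derivative of the real function obtained by varying that entry with all
other entries fixed, evaluated at the current value. -/
def pd1 (f : ((q : Fin P) → Fin (N q) → ℝ) → ℝ) (p : Fin P) (j : Fin (N p))
    (a : (q : Fin P) → Fin (N q) → ℝ) : ℝ :=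
  deriv (fun t => f (Function.update a p (Function.update (a p) j t))) (a p j)

theorem Fintype.sum_apply_update {ι M : Type*} [Fintype ι] [DecidableEq ι] [AddCommGroup M]
    {α : ι → Type*} (φ : ∀ k, α k → M) (v : ∀ k, α k) (i : ι) (t : α i) :
    ∑ k, φ k (Function.update v i t k) = ∑ k, φ k (v k) + (φ i t - φ i (v i)) := by
  simp_rw [Function.apply_update φ]
  rw [sum_update_of_mem (mem_univ i), sum_eq_add_sum_sdiff_singleton_of_mem (mem_univ i)]
  abel

theorem Finset.prod_erase_erase_eq_div {ι K : Type*} [DecidableEq ι] [Field K] {s : Finset ι}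
    {f : ι → K} {p q : ι} (hp : p ∈ s) (hq : q ∈ s) (hpq : p ≠ q) (hfp : f p ≠ 0) (hfq : f q ≠ 0) :
    ∏ r ∈ (s.erase p).erase q, f r = (∏ r ∈ s, f r) / (f p * f q) := by
  rw [eq_div_iff (mul_ne_zero hfp hfq), ← Finset.mul_prod_erase s f hp,
    ← Finset.mul_prod_erase _ f (mem_erase.2 ⟨hpq.symm, hq⟩)]
  ring

theorem update_update_pos {a : (p : Fin P) → Fin (N p) → ℝ} (ha : ∀ p k, 0 < a p k)
    (p : Fin P) (i : Fin (N p)) {t : ℝ} (ht : 0 < t) (s : Fin P) (k : Fin (N s)) :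
    0 < Function.update a p (Function.update (a p) i t) s k := by
  rcases eq_or_ne s p with rfl | hsp
  · rw [Function.update_self, Function.update_apply]
    split_ifs
    exacts [ht, ha s k]
  · rw [Function.update_of_ne hsp]
    exact ha s k

theorem pd1_congr_of_pos {f g : ((q : Fin P) → Fin (N q) → ℝ) → ℝ}
    (hfg : ∀ b : (q : Fin P) → Fin (N q) → ℝ, (∀ p k, 0 < b p k) → f b = g b)
    {a : (p : Fin P) → Fin (N p) → ℝ} (ha : ∀ p k, 0 < a p k) (p : Fin P) (i : Fin (N p)) :
    pd1 f p i a = pd1 g p i a :=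
  Filter.EventuallyEq.deriv_eq <| Filter.eventually_of_mem (Ioi_mem_nhds (ha p i))
    fun _ ht => hfg _ (update_update_pos ha p i ht)

theorem lam1_pos {a : (p : Fin P) → Fin (N p) → ℝ} (ha : ∀ p k, 0 < a p k)
    (hN : ∀ p, 1 ≤ N p) (p : Fin P) : 0 < lam1 a p :=
  haveI : Nonempty (Fin (N p)) := Fin.pos_iff_nonempty.1 (hN p)
  Finset.sum_pos (fun k _ => ha p k) univ_nonempty

theorem llik1_eq_of_pos {a : (p : Fin P) → Fin (N p) → ℝ} (ha : ∀ p k, 0 < a p k)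
    (X : ((p : Fin P) → Fin (N p)) → ℕ) :
    llik1 a X = ∑ p, ∑ k, xmarg X p k * Real.log (a p k) - ∏ p, lam1 a p
      - ∑ i, Real.log (Nat.factorial (X i) : ℝ) := by
  have hlog : ∀ i, (X i : ℝ) * Real.log (mOne a i) = ∑ p, (X i : ℝ) * Real.log (a p (i p)) :=
    fun i => by rw [mOne, Real.log_prod fun p _ => (ha p (i p)).ne', Finset.mul_sum]
  have hmarg : ∀ p, ∑ i, (X i : ℝ) * Real.log (a p (i p)) = ∑ k, xmarg X p k * Real.log (a p k) :=
    fun p => by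
      simp_rw [xmarg, Finset.sum_mul]
      exact (Finset.sum_fiberwise_of_maps_to (fun _ _ => mem_univ _) _).symm.trans
        (Finset.sum_congr rfl fun k _ => Finset.sum_congr rfl fun i hi => by
          rw [(Finset.mem_filter.1 hi).2])
  have hmass : ∑ i, mOne a i = ∏ p, lam1 a p := (Fintype.prod_sum (fun p k => a p k)).symm
  simp only [llik1, Finset.sum_sub_distrib, hlog, hmass]
  rw [Finset.sum_comm, Finset.sum_congr rfl fun p _ => hmarg p]

section Derivatives

variable (a : (p : Fin P) → Fin (N p) → ℝ) (p : Fin P) (i : Fin (N p))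

theorem prod_lam1_update_of_notMem {S : Finset (Fin P)} (hp : p ∉ S) (t : ℝ) :
    ∏ s ∈ S, lam1 (Function.update a p (Function.update (a p) i t)) s = ∏ s ∈ S, lam1 a s :=
  Finset.prod_congr rfl fun s hs => by
    rw [lam1, lam1, Function.update_of_ne (ne_of_mem_of_not_mem hs hp)]

theorem hasDerivAt_prod_lam1_update {S : Finset (Fin P)} (hp : p ∈ S) (t : ℝ) :
    HasDerivAt (fun t => ∏ s ∈ S, lam1 (Function.update a p (Function.update (a p) i t)) s)
      (∏ s ∈ S.erase p, lam1 a s) t := by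
  have hsplit : ∀ t, ∏ s ∈ S, lam1 (Function.update a p (Function.update (a p) i t)) s
      = (t + ∑ k ∈ univ \ {i}, a p k) * ∏ s ∈ S.erase p, lam1 a s := fun t => by
    rw [← Finset.mul_prod_erase S _ hp,
      prod_lam1_update_of_notMem a p i (Finset.notMem_erase p S), lam1, Function.update_self,
      Finset.sum_update_of_mem (mem_univ i)]
  simp only [hsplit]
  simpa using ((hasDerivAt_id t).add_const _).mul_const (∏ s ∈ S.erase p, lam1 a s)

theorem hasDerivAt_sum_mul_log_update (c : (p : Fin P) → Fin (N p) → ℝ) {t : ℝ} (ht : t ≠ 0) :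
    HasDerivAt (fun t => ∑ s, ∑ k, c s k *
        Real.log (Function.update a p (Function.update (a p) i t) s k)) (c p i / t) t := by
  have hsplit : ∀ t, ∑ s, ∑ k, c s k *
      Real.log (Function.update a p (Function.update (a p) i t) s k)
      = ∑ s, ∑ k, c s k * Real.log (a s k) + (c p i * Real.log t - c p i * Real.log (a p i)) :=
    fun t => by
      refine (Fintype.sum_apply_update (fun s v => ∑ k, c s k * Real.log (v k)) a p _).trans ?_
      rw [Fintype.sum_apply_update (fun k v => c p k * Real.log v)]
      ring
  simp only [hsplit]
  exact ((((Real.hasDerivAt_log ht).const_mul (c p i)).sub_const _).const_add _).congr_deriv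
    (div_eq_mul_inv _ _).symm

end Derivatives

theorem pd1_llik1 {a : (p : Fin P) → Fin (N p) → ℝ} (ha : ∀ p k, 0 < a p k)
    (X : ((p : Fin P) → Fin (N p)) → ℕ) (q : Fin P) (j : Fin (N q)) :
    pd1 (fun b => llik1 b X) q j a = xmarg X q j / a q j - ∏ s ∈ univ.erase q, lam1 a s := by
  rw [pd1_congr_of_pos (fun b hb => llik1_eq_of_pos hb X) ha]
  exact (((hasDerivAt_sum_mul_log_update a q j (xmarg X) (ha q j).ne').sub
    (hasDerivAt_prod_lam1_update a q j (mem_univ q) _)).sub_const _).deriv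

theorem stmt_13_general (P : ℕ) (N : Fin P → ℕ) (hN : ∀ p, 1 ≤ N p)
    (a : (p : Fin P) → Fin (N p) → ℝ) (ha : ∀ p j, 0 < a p j)
    (X : ((p : Fin P) → Fin (N p)) → ℕ) :
    (∀ (p : Fin P) (i j : Fin (N p)),
      pd1 (fun a' => pd1 (fun a'' => llik1 a'' X) p j a') p i a =
        -(if i = j then xmarg X p i / (a p i) ^ 2 else 0)) ∧
    (∀ (p q : Fin P), p ≠ q → ∀ (i : Fin (N p)) (j : Fin (N q)),
      pd1 (fun a' => pd1 (fun a'' => llik1 a'' X) q j a') p i a =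
          -∏ s ∈ (Finset.univ.erase p).erase q, lam1 a s ∧
        (∏ s ∈ (Finset.univ.erase p).erase q, lam1 a s) =
          (∏ s, lam1 a s) / (lam1 a p * lam1 a q)) := by
  have hscore : ∀ (q : Fin P) (j : Fin (N q)) (p : Fin P) (i : Fin (N p)),
      pd1 (fun a' => pd1 (fun a'' => llik1 a'' X) q j a') p i a =
        pd1 (fun b => xmarg X q j / b q j - ∏ s ∈ univ.erase q, lam1 b s) p i a :=
    fun q j => pd1_congr_of_pos (fun b hb => pd1_llik1 hb X q j) ha
  refine ⟨fun p i j => ?_, fun p q hpq i j => ⟨?_, ?_⟩⟩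
  · rw [hscore, pd1]
    simp only [Function.update_self, Function.update_apply,
      prod_lam1_update_of_notMem a p i (notMem_erase p univ)]
    by_cases hij : i = j
    · subst hij
      simp only [if_true]
      exact ((((hasDerivAt_inv (ha p i).ne').const_mul (xmarg X p i)).sub_const _).congr_deriv
        (by ring)).deriv
    · simp [Ne.symm hij, hij]
  · rw [hscore, pd1]
    simp only [Function.update_of_ne hpq.symm]
    rw [erase_right_comm]
    simpa using ((hasDerivAt_prod_lam1_update a p i
      (mem_erase.2 ⟨hpq, mem_univ p⟩) (a p i)).const_sub (xmarg X q j / a q j)).deriv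
  · exact prod_erase_erase_eq_div (mem_univ p) (mem_univ q) hpq (lam1_pos ha hN p).ne'
      (lam1_pos ha hN q).ne'

/-- **Hessian of the rank-one PCP loglikelihood.** For every mode `p` and indices `i, j`,
`∂²ℓ/∂a_p(i)∂a_p(j) = −[i = j] · x_p(i)/a_p(i)²`; and for modes `p ≠ q` and indices
`i, j`, `∂²ℓ/∂a_p(i)∂a_q(j) = −∏_{s≠p,q} λ_s`, which equals `−λ/(λ_p λ_q)` with
`λ = λ_1 ⋯ λ_P`. -/
theorem stmt_13 (P : ℕ) (hP : 2 ≤ P) (N : Fin P → ℕ) (hN : ∀ p, 1 ≤ N p)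
    (a : (p : Fin P) → Fin (N p) → ℝ) (ha : ∀ p j, 0 < a p j)
    (X : ((p : Fin P) → Fin (N p)) → ℕ) :
    (∀ (p : Fin P) (i j : Fin (N p)),
      pd1 (fun a' => pd1 (fun a'' => llik1 a'' X) p j a') p i a =
        -(if i = j then xmarg X p i / (a p i) ^ 2 else 0)) ∧
    (∀ (p q : Fin P), p ≠ q → ∀ (i : Fin (N p)) (j : Fin (N q)),
      pd1 (fun a' => pd1 (fun a'' => llik1 a'' X) q j a') p i a =
          -∏ s ∈ (Finset.univ.erase p).erase q, lam1 a s ∧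
        (∏ s ∈ (Finset.univ.erase p).erase q, lam1 a s) =
          (∏ s, lam1 a s) / (lam1 a p * lam1 a q)) :=
  stmt_13_general P N hN a ha X
end
end

section
/- Suppose every mode-p marginal x_p(j) = Σ_{i : i_p = j} x_i is strictly positive, and set λ = Σ_i x_i > 0. Consider the constraint set Θ̃ of parameters θ = (a_1,…,a_P) with strictly positive entries satisfying Σ_j a_p(j) = 1 for every p ∈ {2,…,P}. Then the point θ̂ defined by â_1(j) = x_1(j) and â_p(j) = x_p(j)/λ for p ∈ {2,…,P} lies in Θ̃, the gradient of the rank-one PCP loglikelihood vanishes at θ̂, and θ̂ is the unique point of Θ̃ at which the gradient vanishes. -/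
open Finset

noncomputable section

variable {P : ℕ} {N : Fin P → ℕ}

/-- The candidate maximum likelihood estimator on the constraint set `Θ̃`: the first
factor carries all the weight, `â_1(j) = x_1(j)`, and the other factors are normalized,
`â_p(j) = x_p(j)/λ` for `p ≠ 1`, where `λ = Σ_i x_i`. -/
def ahat [NeZero P] (X : ((p : Fin P) → Fin (N p)) → ℕ) (p : Fin P) (j : Fin (N p)) : ℝ :=
  if p = 0 then xmarg X p j
  else xmarg X p j / ∑ i : (q : Fin P) → Fin (N q), (X i : ℝ)

/-- **Unique MLE on the simplex-constrained set.** Suppose every mode-`p` marginal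
`x_p(j)` is strictly positive. Then `θ̂ = ahat X` has strictly positive entries and
lies in `Θ̃` (each factor other than the first sums to one), the gradient of the
rank-one PCP loglikelihood vanishes at `θ̂` (`x_p(j)/â_p(j) = ∏_{q≠p} λ̂_q` for all
`p, j`), and `θ̂` is the unique point of `Θ̃` at which the gradient vanishes. -/
theorem stmt_15 (P : ℕ) (hP : 2 ≤ P) [NeZero P] (N : Fin P → ℕ) (hN : ∀ p, 1 ≤ N p)
    (X : ((p : Fin P) → Fin (N p)) → ℕ)
    (hX : ∀ (p : Fin P) (j : Fin (N p)), 0 < xmarg X p j) :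
    ((∀ (p : Fin P) (j : Fin (N p)), 0 < ahat X p j) ∧
      (∀ p : Fin P, p ≠ 0 → ∑ j, ahat X p j = 1)) ∧
    (∀ (p : Fin P) (j : Fin (N p)),
      xmarg X p j / ahat X p j = ∏ q ∈ Finset.univ.erase p, lam1 (ahat X) q) ∧
    (∀ b : (p : Fin P) → Fin (N p) → ℝ,
      (∀ p j, 0 < b p j) →
      (∀ p : Fin P, p ≠ 0 → ∑ j, b p j = 1) →
      (∀ (p : Fin P) (j : Fin (N p)),
        xmarg X p j / b p j = ∏ q ∈ Finset.univ.erase p, lam1 b q) →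
      b = ahat X) := by
  have hne : ∀ p : Fin P, Nonempty (Fin (N p)) := fun p => ⟨⟨0, hN p⟩⟩
  set lamX : ℝ := ∑ i : (q : Fin P) → Fin (N q), (X i : ℝ) with hlamdef
  have hmarg : ∀ p : Fin P, ∑ j, xmarg X p j = lamX := by
    intro p
    simpa [xmarg] using
      Finset.sum_fiberwise (Finset.univ) (fun i : (q : Fin P) → Fin (N q) => i p)
        (fun i => (X i : ℝ))
  have hlampos : 0 < lamX := by
    rw [← hmarg 0]
    exact Finset.sum_pos (fun j _ => hX 0 j) (by simpa using Finset.univ_nonempty (α := Fin (N 0)))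
  have hpos : ∀ (p : Fin P) (j : Fin (N p)), 0 < ahat X p j := by
    intro p j
    unfold ahat
    split
    · exact hX p j
    · exact div_pos (hX p j) hlampos
  have hsum1 : ∀ p : Fin P, p ≠ 0 → ∑ j, ahat X p j = 1 := by
    intro p hp
    simp only [ahat, if_neg hp, ← hlamdef, ← Finset.sum_div, hmarg p]
    exact div_self (ne_of_gt hlampos)
  have hlam1 : ∀ q : Fin P, lam1 (ahat X) q = if q = 0 then lamX else 1 := by
    intro q
    by_cases hq : q = 0
    · subst hq
      simp only [lam1, ahat, if_pos rfl, if_pos rfl]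
      exact hmarg 0
    · simp only [if_neg hq]
      exact hsum1 q hq
  have hprod : ∀ p : Fin P, (∏ q ∈ Finset.univ.erase p, lam1 (ahat X) q)
      = if p = 0 then 1 else lamX := by
    intro p
    by_cases hp : p = 0
    · subst hp
      rw [if_pos rfl]
      apply Finset.prod_eq_one
      intro q hq
      rw [hlam1 q, if_neg (Finset.ne_of_mem_erase hq)]
    · rw [if_neg hp]
      rw [Finset.prod_eq_single_of_mem (0 : Fin P)
        (Finset.mem_erase.2 ⟨Ne.symm hp, Finset.mem_univ _⟩)
        (fun q _ hq0 => by rw [hlam1 q, if_neg hq0])]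
      rw [hlam1 0, if_pos rfl]
  refine ⟨⟨hpos, hsum1⟩, ?_, ?_⟩
  · intro p j
    rw [hprod p]
    by_cases hp : p = 0
    · subst hp
      simp only [ahat, if_pos rfl]
      exact div_self (ne_of_gt (hX 0 j))
    · rw [if_neg hp]
      simp only [ahat, if_neg hp, ← hlamdef]
      rw [div_div_eq_mul_div, mul_comm, mul_div_assoc, div_self (ne_of_gt (hX p j)), mul_one]
  · intro b hb1 hb2 hg
    have hLpos : ∀ q : Fin P, 0 < lam1 b q := fun q =>
      Finset.sum_pos (fun j _ => hb1 q j) (by simpa using Finset.univ_nonempty (α := Fin (N q)))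
    have hbx : ∀ (p : Fin P) (j : Fin (N p)),
        xmarg X p j = b p j * ∏ q ∈ Finset.univ.erase p, lam1 b q := by
      intro p j
      rw [← hg p j, mul_comm, div_mul_cancel₀ _ (ne_of_gt (hb1 p j))]
    have hsum : ∀ p : Fin P, lamX = lam1 b p * ∏ q ∈ Finset.univ.erase p, lam1 b q := by
      intro p
      rw [← hmarg p]
      rw [Finset.sum_congr rfl (fun j _ => hbx p j), ← Finset.sum_mul]
      rfl
    have herase0 : (∏ q ∈ Finset.univ.erase (0 : Fin P), lam1 b q) = 1 := by
      apply Finset.prod_eq_one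
      intro q hq
      exact hb2 q (Finset.ne_of_mem_erase hq)
    have hL0 : lam1 b 0 = lamX := by
      have := hsum 0
      rw [herase0, mul_one] at this
      exact this.symm
    have heraseP : ∀ p : Fin P, p ≠ 0 →
        (∏ q ∈ Finset.univ.erase p, lam1 b q) = lamX := by
      intro p hp
      have := hsum p
      rw [show lam1 b p = 1 from hb2 p hp, one_mul] at this
      exact this.symm
    funext p j
    by_cases hp : p = 0
    · subst hp
      rw [ahat, if_pos rfl, hbx 0 j, herase0, mul_one]
    · rw [ahat, if_neg hp, ← hlamdef, hbx p j, heraseP p hp,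
        mul_div_cancel_right₀ _ (ne_of_gt hlampos)]
end
end
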